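/- Let a : E → ℝ with a(e) ≥ 0 for all e be a capacity upgrade, and write C + a for the upgraded capacity function e ↦ C(e) + a(e). Let X be a finite nonempty set of failure scenarios such that for every x ∈ X some flow avoiding x exists, assume MLU*(∅,C,D) > 0, and let x^w ∈ X attain the maximum of MLU*(x,C,D) over x ∈ X, with MLU*(x^w,C,D) > 0. Define the critical failure set X_C = { x ∈ X : F(x,C,D) ≥ F(x^w,C,D) / MLU*(x^w,C,D) }. If MLU*(x, C+a, D) ≤ 1 for every x ∈ X_C, then MLU*(x, C+a, D) ≤ 1 for every x ∈ X. -/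
import Mathlib


open scoped BigOperators

section Defs

variable {V E D : Type} [Fintype E] [Fintype D] [DecidableEq V]

/-- `r : D → E → ℝ` is a flow routing the traffic demands: it is nonnegative and satisfies
flow conservation: at every node `v`, the net outflow of demand `d` is `T d` at the source
`s d`, `-T d` at the destination `t d`, and `0` elsewhere. -/
def IsFlow (src dst : E → V) (s t : D → V) (T : D → ℝ) (r : D → E → ℝ) : Prop :=
  (∀ d e, 0 ≤ r d e) ∧
    ∀ d v, ((∑ e, if src e = v then r d e else 0) - ∑ e, if dst e = v then r d e else 0) =
      (if v = s d then T d else if v = t d then -T d else 0)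

/-- A flow avoids the failure scenario `x` (a set of failed links) if it routes no traffic
on any failed link. -/
def Avoids (r : D → E → ℝ) (x : Set E) : Prop :=
  ∀ d, ∀ e ∈ x, r d e = 0

/-- Maximum link utilization of the flow `r` under capacities `C`. -/
noncomputable def MLU (C : E → ℝ) (r : D → E → ℝ) : ℝ :=
  ⨆ e, (∑ d, r d e) / C e

/-- Optimal maximum link utilization under failure scenario `x`: infimum of `MLU` over all
flows avoiding `x`, taken in `EReal` so that it is `+∞` when no flow avoiding `x` exists. -/
noncomputable def MLUopt (src dst : E → V) (s t : D → V) (T : D → ℝ) (C : E → ℝ)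
    (x : Set E) : EReal :=
  sInf {u : EReal | ∃ r, IsFlow src dst s t T r ∧ Avoids r x ∧ u = (MLU C r : EReal)}

/-- Failure impact: normalized optimal MLU under failure scenario `x`. -/
noncomputable def impact (src dst : E → V) (s t : D → V) (T : D → ℝ) (C : E → ℝ)
    (x : Set E) : EReal :=
  MLUopt src dst s t T C x / MLUopt src dst s t T C (∅ : Set E)


lemma MLU_nonneg (C : E → ℝ) (hC : ∀ e, 0 < C e) (r : D → E → ℝ) (hr : ∀ d e, 0 ≤ r d e) :
    0 ≤ MLU C r :=
  Real.iSup_nonneg fun e => div_nonneg (Finset.sum_nonneg fun d _ => hr d e) (hC e).le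

lemma MLU_mono (C : E → ℝ) (hC : ∀ e, 0 < C e) (a : E → ℝ) (ha : ∀ e, 0 ≤ a e)
    (r : D → E → ℝ) (hr : ∀ d e, 0 ≤ r d e) :
    MLU (fun e => C e + a e) r ≤ MLU C r := by
  apply Real.iSup_le _ (MLU_nonneg C hC r hr)
  intro e
  have h1 : (∑ d, r d e) / (C e + a e) ≤ (∑ d, r d e) / C e :=
    div_le_div_of_nonneg_left (Finset.sum_nonneg fun d _ => hr d e) (hC e)
      (by linarith [ha e])
  refine h1.trans ?_
  exact le_ciSup (f := fun e => (∑ d, r d e) / C e) (Set.Finite.bddAbove (Set.finite_range _)) e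

lemma MLUopt_le (src dst : E → V) (s t : D → V) (T : D → ℝ) (C : E → ℝ)
    (x : Set E) (r : D → E → ℝ) (hr : IsFlow src dst s t T r) (hav : Avoids r x) :
    MLUopt src dst s t T C x ≤ (MLU C r : EReal) :=
  sInf_le ⟨r, hr, hav, rfl⟩

lemma MLUopt_empty_le (src dst : E → V) (s t : D → V) (T : D → ℝ) (C : E → ℝ)
    (x : Set E) : MLUopt src dst s t T C (∅ : Set E) ≤ MLUopt src dst s t T C x :=
  sInf_le_sInf fun _ ⟨r, hr, _, hu⟩ => ⟨r, hr, fun _ e he => absurd he (Set.notMem_empty e), hu⟩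

lemma MLUopt_mono_cap (src dst : E → V) (s t : D → V) (T : D → ℝ) (C : E → ℝ)
    (hC : ∀ e, 0 < C e) (a : E → ℝ) (ha : ∀ e, 0 ≤ a e) (x : Set E) :
    MLUopt src dst s t T (fun e => C e + a e) x ≤ MLUopt src dst s t T C x := by
  refine le_sInf fun u hu => ?_
  obtain ⟨r, hr, hav, rfl⟩ := hu
  refine (MLUopt_le src dst s t T _ x r hr hav).trans ?_
  exact_mod_cast MLU_mono C hC a ha r hr.1

end Defs

/-- Theorem 1 of the paper. Let `a` be a nonnegative capacity upgrade and
`X` a finite nonempty set of feasible failure scenarios. If the upgraded network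
`C + a` is congestion free (`MLU* ≤ 1`) on the critical failure set
`X_C = {x ∈ X | F(x,C,D) ≥ F(x^w,C,D)/MLU*(x^w,C,D)}`, where `x^w` maximizes
`MLU*(·,C,D)` over `X`, then it is congestion free on all of `X`. -/
theorem network_upgrade_critical_set_suffices
    {V E D : Type} [Fintype V] [Fintype E] [Fintype D] [DecidableEq V]
    (src dst : E → V) (s t : D → V) (T : D → ℝ) (C : E → ℝ)
    (hC : ∀ e, 0 < C e) (hT : ∀ d, 0 ≤ T d) (hst : ∀ d, t d ≠ s d)
    (a : E → ℝ) (ha : ∀ e, 0 ≤ a e)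
    (X : Set (Set E)) (hXfin : X.Finite) (hXne : X.Nonempty)
    (hfeas : ∀ x ∈ X, ∃ r, IsFlow src dst s t T r ∧ Avoids r x)
    (h0 : 0 < MLUopt src dst s t T C (∅ : Set E))
    (xw : Set E) (hxwX : xw ∈ X)
    (hxwmax : ∀ x ∈ X, MLUopt src dst s t T C x ≤ MLUopt src dst s t T C xw)
    (hxwpos : 0 < MLUopt src dst s t T C xw)
    (hcrit : ∀ x ∈ {x ∈ X |
        impact src dst s t T C xw / MLUopt src dst s t T C xw ≤ impact src dst s t T C x},
      MLUopt src dst s t T (fun e => C e + a e) x ≤ 1) :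
    ∀ x ∈ X, MLUopt src dst s t T (fun e => C e + a e) x ≤ 1 := by
  intro x hxX
  by_cases hx : impact src dst s t T C xw / MLUopt src dst s t T C xw ≤
      impact src dst s t T C x
  · exact hcrit x ⟨hxX, hx⟩
  set u0 := MLUopt src dst s t T C (∅ : Set E) with hu0
  set uw := MLUopt src dst s t T C xw with huw
  set ux := MLUopt src dst s t T C x with hux
  obtain ⟨rw, hrw, havw⟩ := hfeas xw hxwX
  have huwtop : uw ≠ ⊤ :=
    ne_top_of_le_ne_top (EReal.coe_ne_top _) (MLUopt_le src dst s t T C xw rw hrw havw)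
  have huwbot : uw ≠ ⊥ := ne_bot_of_le_ne_bot (by simp) hxwpos.le
  have h0w : u0 ≤ uw := MLUopt_empty_le src dst s t T C xw
  have hu0top : u0 ≠ ⊤ := ne_top_of_le_ne_top huwtop h0w
  have hu0bot : u0 ≠ ⊥ := ne_bot_of_le_ne_bot (by simp) h0.le
  have h0x : u0 ≤ ux := MLUopt_empty_le src dst s t T C x
  have hxw : ux ≤ uw := hxwmax x hxX
  have huxtop : ux ≠ ⊤ := ne_top_of_le_ne_top huwtop hxw
  have huxbot : ux ≠ ⊥ := ne_bot_of_le_ne_bot hu0bot h0x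
  set m0 := u0.toReal with hm0
  set mw := uw.toReal with hmw
  set mx := ux.toReal with hmx
  have e0 : u0 = (m0 : EReal) := (EReal.coe_toReal hu0top hu0bot).symm
  have ew : uw = (mw : EReal) := (EReal.coe_toReal huwtop huwbot).symm
  have ex : ux = (mx : EReal) := (EReal.coe_toReal huxtop huxbot).symm
  have hm0pos : 0 < m0 := by rw [e0] at h0; exact_mod_cast h0
  have hmwpos : 0 < mw := by rw [ew] at hxwpos; exact_mod_cast hxwpos
  have hxlt : mx < 1 := by
    rw [impact, impact, ← hu0, ← huw, ← hux, e0, ew, ex, ← EReal.coe_div, ← EReal.coe_div,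
      ← EReal.coe_div, EReal.coe_le_coe_iff, not_le] at hx
    have heq : mw / m0 / mw = 1 / m0 := by field_simp
    rw [heq, div_lt_div_iff₀ hm0pos hm0pos] at hx
    nlinarith
  have h1 : ux ≤ 1 := by rw [ex, ← EReal.coe_one]; exact_mod_cast hxlt.le
  exact (MLUopt_mono_cap src dst s t T C hC a ha x).trans h1
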